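/- arXiv:1106.2756 — 7 statements merged into one kernel-verified Lean document; each statement's English description precedes it below -/
import Mathlib

section
/- For 0 < g < 1, define θ2(g) = g^{1/4} ∏_{n≥1} (1-g^{2n})(1+g^{2n})(1+g^{2n-2}), θ3(g) = ∏_{n≥1} (1-g^{2n})(1+g^{2n-1})^2, and θ4(g) = ∏_{n≥1} (1-g^{2n})(1-g^{2n-1})^2. Then θ2(g)·θ4(g)/θ3(g)^2 = 2·(g^{1/24} ∏_{n≥1} (1+(-g)^n))^6. -/
/-!
Write `A, B, D, E` for the products over `n ≥ 1` of `1 - g^(2n)`, `1 + g^(2n)`, `1 + g^(2n-1)`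
and `1 - g^(2n-1)`. Then `θ2 = 2 g^(1/4) A B²`, `θ3 = A D²`, `θ4 = A E²`, and splitting
`∏ (1 + (-g)^n)` into odd and even `n` gives `E B`. The identity reduces to
`B² E² / D⁴ = (E B)⁶`, i.e. to Euler's identity `B D E = 1`, which follows from
`∏ (1 + g^n) ∏ (1 - g^n) = ∏ (1 - g^(2n))` after splitting both factors on the left into odd and
even `n` and cancelling `A > 0`.
-/

namespace Real

lemma tprod_one_add_pos {ι : Type*} {f : ι → ℝ} (hf : Summable f) (h : ∀ i, -1 < f i) :
    0 < ∏' i, (1 + f i) := by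
  rw [← rexp_tsum_eq_tprod (fun i ↦ by linarith [h i]) (summable_log_one_add_of_summable hf)]
  exact exp_pos _

lemma tprod_one_add_eq_even_mul_odd {f : ℕ → ℝ} (hf : Summable f) :
    ∏' n, (1 + f n) = (∏' n, (1 + f (2 * n))) * ∏' n, (1 + f (2 * n + 1)) := by
  have h2 : Function.Injective (2 * · : ℕ → ℕ) := mul_right_injective₀ two_ne_zero
  refine (tprod_even_mul_odd (f := fun n ↦ 1 + f n)
    (Real.multipliable_one_add_of_summable (hf.comp_injective h2))
    (Real.multipliable_one_add_of_summable (hf.comp_injective ?_))).symm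
  exact (add_left_injective 1).comp h2

section
variable {q : ℝ}

lemma summable_pow_mul_add (hq : |q| < 1) {a : ℕ} (ha : a ≠ 0) (b : ℕ) :
    Summable fun n : ℕ ↦ q ^ (a * n + b) := by
  have hqa : |q ^ a| < 1 := by rw [abs_pow]; exact pow_lt_one₀ (abs_nonneg q) hq ha
  simpa [pow_add, pow_mul] using (summable_geometric_of_abs_lt_one hqa).mul_right (q ^ b)

lemma multipliable_one_add_pow_mul_add (hq : |q| < 1) {a : ℕ} (ha : a ≠ 0) (b : ℕ) :
    Multipliable fun n : ℕ ↦ 1 + q ^ (a * n + b) :=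
  Real.multipliable_one_add_of_summable (summable_pow_mul_add hq ha b)

lemma multipliable_one_sub_pow_mul_add (hq : |q| < 1) {a : ℕ} (ha : a ≠ 0) (b : ℕ) :
    Multipliable fun n : ℕ ↦ 1 - q ^ (a * n + b) := by
  simpa [sub_eq_add_neg] using
    Real.multipliable_one_add_of_summable (summable_pow_mul_add hq ha b).neg

lemma tprod_one_sub_pow_mul_add_pos (hq : |q| < 1) {a b : ℕ} (ha : a ≠ 0) (hb : b ≠ 0) :
    0 < ∏' n : ℕ, (1 - q ^ (a * n + b)) := by
  simp only [sub_eq_add_neg]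
  refine tprod_one_add_pos (summable_pow_mul_add hq ha b).neg fun n ↦ neg_lt_neg ?_
  calc q ^ (a * n + b) ≤ |q| ^ (a * n + b) := by rw [← abs_pow]; exact le_abs_self _
    _ < 1 := pow_lt_one₀ (abs_nonneg q) hq (by omega)

lemma tprod_one_add_pow_two_mul (hq : |q| < 1) :
    ∏' n : ℕ, (1 + q ^ (2 * n)) = 2 * ∏' n : ℕ, (1 + q ^ (2 * n + 2)) := by
  have hshift : Multipliable fun n : ℕ ↦ 1 + q ^ (2 * (n + 1)) := by
    simpa [mul_add] using multipliable_one_add_pow_mul_add hq two_ne_zero 2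
  rw [tprod_eq_zero_mul' (f := fun n ↦ 1 + q ^ (2 * n)) hshift]
  norm_num [mul_add]

lemma tprod_one_add_pow_succ (hq : |q| < 1) :
    ∏' n : ℕ, (1 + q ^ (n + 1)) =
      (∏' n : ℕ, (1 + q ^ (2 * n + 1))) * ∏' n : ℕ, (1 + q ^ (2 * n + 2)) :=
  tprod_one_add_eq_even_mul_odd (f := fun n ↦ q ^ (n + 1))
    (by simpa using summable_pow_mul_add hq one_ne_zero 1)

lemma tprod_one_sub_pow_succ (hq : |q| < 1) :
    ∏' n : ℕ, (1 - q ^ (n + 1)) =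
      (∏' n : ℕ, (1 - q ^ (2 * n + 1))) * ∏' n : ℕ, (1 - q ^ (2 * n + 2)) := by
  simpa only [sub_eq_add_neg] using tprod_one_add_eq_even_mul_odd (f := fun n ↦ -q ^ (n + 1))
    (by simpa using (summable_pow_mul_add hq one_ne_zero 1).neg)

lemma tprod_one_add_neg_pow_succ (hq : |q| < 1) :
    ∏' n : ℕ, (1 + (-q) ^ (n + 1)) =
      (∏' n : ℕ, (1 - q ^ (2 * n + 1))) * ∏' n : ℕ, (1 + q ^ (2 * n + 2)) := by
  have hodd (n : ℕ) : (-q) ^ (2 * n + 1) = -q ^ (2 * n + 1) := Odd.neg_pow ⟨n, rfl⟩ q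
  have heven (n : ℕ) : (-q) ^ (2 * n + 2) = q ^ (2 * n + 2) := Even.neg_pow ⟨n + 1, by ring⟩ q
  simp only [tprod_one_add_pow_succ (abs_neg q ▸ hq), hodd, heven, sub_eq_add_neg]

lemma tprod_one_add_pow_succ_mul_tprod_one_sub_pow_odd (hq : |q| < 1) :
    (∏' n : ℕ, (1 + q ^ (n + 1))) * ∏' n : ℕ, (1 - q ^ (2 * n + 1)) = 1 := by
  have hA := tprod_one_sub_pow_mul_add_pos hq two_ne_zero two_ne_zero
  have hprod : (∏' n : ℕ, (1 + q ^ (n + 1))) * ∏' n : ℕ, (1 - q ^ (n + 1)) =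
      ∏' n : ℕ, (1 - q ^ (2 * n + 2)) := by
    have hR : Multipliable fun n : ℕ ↦ 1 + q ^ (n + 1) := by
      simpa using multipliable_one_add_pow_mul_add hq one_ne_zero 1
    have hQ : Multipliable fun n : ℕ ↦ 1 - q ^ (n + 1) := by
      simpa using multipliable_one_sub_pow_mul_add hq one_ne_zero 1
    rw [← hR.tprod_mul hQ]
    refine tprod_congr fun n ↦ ?_
    ring
  rw [tprod_one_sub_pow_succ hq] at hprod
  exact mul_right_cancel₀ hA.ne' (by linear_combination hprod)

end

end Real

open Real in
/-- With `θ2, θ3, θ4` given by their product representations in `g`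
(for `0 < g < 1`), one has `θ2 g * θ4 g / (θ3 g)^2
= 2 * (g^(1/24) * ∏_{n≥1} (1 + (-g)^n))^6`. -/
theorem stmt_2 (g : ℝ) (hg0 : 0 < g) (hg1 : g < 1)
    (θ2 θ3 θ4 : ℝ → ℝ)
    (h2 : θ2 g = g ^ ((1 : ℝ) / 4) *
      ∏' n : ℕ, ((1 - g ^ (2 * n + 2)) * (1 + g ^ (2 * n + 2)) * (1 + g ^ (2 * n))))
    (h3 : θ3 g = ∏' n : ℕ, ((1 - g ^ (2 * n + 2)) * (1 + g ^ (2 * n + 1)) ^ 2))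
    (h4 : θ4 g = ∏' n : ℕ, ((1 - g ^ (2 * n + 2)) * (1 - g ^ (2 * n + 1)) ^ 2)) :
    θ2 g * θ4 g / (θ3 g) ^ 2 =
      2 * (g ^ ((1 : ℝ) / 24) * ∏' n : ℕ, (1 + (-g) ^ (n + 1))) ^ 6 := by
  have hg : |g| < 1 := by rwa [abs_of_pos hg0]
  have hA := multipliable_one_sub_pow_mul_add hg two_ne_zero 2
  have hB := multipliable_one_add_pow_mul_add hg two_ne_zero 2
  have hC : Multipliable fun n : ℕ ↦ 1 + g ^ (2 * n) := by
    simpa using multipliable_one_add_pow_mul_add hg two_ne_zero 0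
  have hD := multipliable_one_add_pow_mul_add hg two_ne_zero 1
  have hE := multipliable_one_sub_pow_mul_add hg two_ne_zero 1
  have hA0 := (tprod_one_sub_pow_mul_add_pos hg two_ne_zero two_ne_zero).ne'
  have heuler := tprod_one_add_pow_succ_mul_tprod_one_sub_pow_odd hg
  rw [tprod_one_add_pow_succ hg] at heuler
  have hD0 := left_ne_zero_of_mul (left_ne_zero_of_mul_eq_one heuler)
  have hrpow : (g ^ ((1 : ℝ) / 24)) ^ 6 = g ^ ((1 : ℝ) / 4) := by
    rw [← rpow_natCast, ← rpow_mul hg0.le]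
    norm_num
  rw [h2, h3, h4, (hA.mul hB).tprod_mul hC, hA.tprod_mul hB, hA.tprod_mul (hD.pow 2),
    hA.tprod_mul (hE.pow 2), hD.tprod_pow, hE.tprod_pow, tprod_one_add_pow_two_mul hg,
    tprod_one_add_neg_pow_succ hg, mul_pow (g ^ _), hrpow]
  set B := ∏' n : ℕ, (1 + g ^ (2 * n + 2))
  set D := ∏' n : ℕ, (1 + g ^ (2 * n + 1))
  set E := ∏' n : ℕ, (1 - g ^ (2 * n + 1))
  field_simp
  rw [show B ^ 6 * E ^ 6 * D ^ 4 = B ^ 2 * E ^ 2 * (D * B * E) ^ 4 by ring, heuler, one_pow,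
    mul_one]
end

section
/- For every odd integer n ≥ 3 and every real g with 0 < g ≤ e^{-π}, the quantity -n(n-1)g^{n-2}/(1-g^n) - n^2 g^{2(n-1)}/(1-g^n)^2 + n(n+1)g^{n-1}/(1+g^{n+1}) - (n+1)^2 g^{2n}/(1+g^{n+1})^2 is negative. -/
open Real

/-- For every odd integer `n ≥ 3` and real `0 < g ≤ e^{-π}`, the sum of the
pair of consecutive terms (indices `n` and `n+1`) is negative. -/
theorem stmt_5 (n : ℕ) (hodd : Odd n) (hn : 3 ≤ n) (g : ℝ) (hg0 : 0 < g)
    (hg1 : g ≤ Real.exp (-π)) :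
    -(n : ℝ) * ((n : ℝ) - 1) * g ^ (n - 2) / (1 - g ^ n)
      - (n : ℝ) ^ 2 * g ^ (2 * (n - 1)) / (1 - g ^ n) ^ 2
      + (n : ℝ) * ((n : ℝ) + 1) * g ^ (n - 1) / (1 + g ^ (n + 1))
      - ((n : ℝ) + 1) ^ 2 * g ^ (2 * n) / (1 + g ^ (n + 1)) ^ 2 < 0 := by
  have hπ : (1:ℝ) ≤ π := by linarith [Real.pi_gt_three]
  have hghalf : g < 1/2 := by
    have h1 : Real.exp (-π) ≤ Real.exp (-1) := Real.exp_le_exp.2 (by linarith)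
    have h2 : Real.exp (-1) < 1/2 := by
      rw [Real.exp_neg]
      have he : (2:ℝ) < Real.exp 1 := by
        have := Real.exp_one_gt_d9; linarith
      rw [inv_lt_iff_one_lt_mul₀ (by linarith)]
      linarith
    linarith
  have hg1' : g < 1 := by linarith
  have hn3 : (3:ℝ) ≤ (n:ℝ) := by exact_mod_cast hn
  have hgn : g ^ n < 1 := pow_lt_one₀ hg0.le hg1' (by omega)
  have hd1 : 0 < 1 - g ^ n := by linarith
  have hd2 : 0 < 1 + g ^ (n+1) := by positivity
  have hB : 0 ≤ (n : ℝ) ^ 2 * g ^ (2 * (n - 1)) / (1 - g ^ n) ^ 2 := by positivity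
  have hD : 0 ≤ ((n : ℝ) + 1) ^ 2 * g ^ (2 * n) / (1 + g ^ (n + 1)) ^ 2 := by positivity
  have key : (n : ℝ) * ((n : ℝ) + 1) * g ^ (n - 1) / (1 + g ^ (n + 1))
      < (n : ℝ) * ((n : ℝ) - 1) * g ^ (n - 2) / (1 - g ^ n) := by
    rw [div_lt_div_iff₀ hd2 hd1]
    have hpow : g ^ (n - 1) = g ^ (n - 2) * g := by
      rw [← pow_succ]; congr 1; omega
    rw [hpow]
    have hgp : (0:ℝ) < g ^ (n-2) := pow_pos hg0 _
    have hgn1 : (0:ℝ) < g ^ (n+1) := pow_pos hg0 _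
    have hred : ((n:ℝ)+1)*g*(1-g^n) < ((n:ℝ)-1)*(1+g^(n+1)) := by
      nlinarith [pow_pos hg0 n, mul_pos hg0 (pow_pos hg0 n)]
    have h2' := mul_lt_mul_of_pos_left hred (show (0:ℝ) < (n:ℝ) * g^(n-2) by positivity)
    nlinarith [h2']
  have hA : -(n:ℝ) * ((n:ℝ)-1) * g^(n-2) / (1 - g^n)
      = -((n:ℝ)*((n:ℝ)-1)*g^(n-2)/(1-g^n)) := by ring
  rw [hA]
  linarith
end

section
/- Let θ2, θ3, θ4 denote the Jacobi theta null values at argument iy, y > 0 real. Then the Jacobi identity θ2(y)^4 + θ4(y)^4 = θ3(y)^4 holds. -/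
open Real

noncomputable def theta2 (y : ℝ) : ℝ := ∑' n : ℤ, Real.exp (-π * y * ((n : ℝ) + 1 / 2) ^ 2)
noncomputable def theta3 (y : ℝ) : ℝ := ∑' n : ℤ, Real.exp (-π * y * (n : ℝ) ^ 2)
noncomputable def theta4 (y : ℝ) : ℝ := ∑' n : ℤ, (-1 : ℝ) ^ n * Real.exp (-π * y * (n : ℝ) ^ 2)

lemma jacobi_half_abs : |(1 : ℝ) / 2| ≤ 1 / 2 := by
  rw [abs_of_nonneg] <;> norm_num

/-- Elementary inequality used for summability. -/
lemma jacobi_sq_lower {x d : ℝ} (hd : |d| ≤ 1 / 2) : |x| - 2 ≤ (x + d) ^ 2 := by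
  rw [abs_le] at hd
  rcases abs_cases x with ⟨h, hx⟩ | ⟨h, hx⟩ <;> rw [h]
  · nlinarith [sq_nonneg (x - 1), mul_nonneg hx (by linarith : (0:ℝ) ≤ d + 1/2)]
  · nlinarith [sq_nonneg (x + 1), mul_nonneg (by linarith : (0:ℝ) ≤ -x)
      (by linarith : (0:ℝ) ≤ 1/2 - d)]

lemma jacobi_summable {y : ℝ} (hy : 0 < y) {d : ℝ} (hd : |d| ≤ 1 / 2) :
    Summable fun n : ℤ => Real.exp (-π * y * ((n : ℝ) + d) ^ 2) := by
  have hpy : 0 < π * y := mul_pos pi_pos hy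
  have hlt : Real.exp (-(π * y)) < 1 := exp_lt_one_iff.mpr (by linarith)
  have hbase : Summable fun k : ℕ => Real.exp (2 * (π * y)) * Real.exp (-(π * y)) ^ k :=
    (summable_geometric_of_lt_one (exp_nonneg _) hlt).mul_left _
  have main : ∀ (k : ℕ) (x : ℝ), |x| = (k : ℝ) →
      Real.exp (-π * y * (x + d) ^ 2) ≤ Real.exp (2 * (π * y)) * Real.exp (-(π * y)) ^ k := by
    intro k x hx
    rw [← Real.exp_nat_mul, ← Real.exp_add, Real.exp_le_exp]
    have h1 : (k : ℝ) - 2 ≤ (x + d) ^ 2 := by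
      rw [← hx]; exact jacobi_sq_lower hd
    nlinarith [mul_le_mul_of_nonneg_left h1 hpy.le]
  apply Summable.of_nat_of_neg
  · refine Summable.of_nonneg_of_le (fun k => (exp_pos _).le) (fun k => ?_) hbase
    exact main k _ (by push_cast; exact Nat.abs_cast k)
  · refine Summable.of_nonneg_of_le (fun k => (exp_pos _).le) (fun k => ?_) hbase
    refine main k _ ?_
    push_cast
    rw [abs_neg]
    exact Nat.abs_cast k

lemma hasSum_theta3 {y : ℝ} (hy : 0 < y) :
    HasSum (fun n : ℤ => Real.exp (-π * y * (n : ℝ) ^ 2)) (theta3 y) := by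
  have h := jacobi_summable hy (d := 0) (by rw [abs_of_nonneg] <;> norm_num)
  simp only [add_zero] at h
  exact h.hasSum

lemma hasSum_theta2 {y : ℝ} (hy : 0 < y) :
    HasSum (fun n : ℤ => Real.exp (-π * y * ((n : ℝ) + 1 / 2) ^ 2)) (theta2 y) :=
  (jacobi_summable hy (d := 1/2) jacobi_half_abs).hasSum

lemma hasSum_theta4 {y : ℝ} (hy : 0 < y) :
    HasSum (fun n : ℤ => (-1 : ℝ) ^ n * Real.exp (-π * y * (n : ℝ) ^ 2)) (theta4 y) := by
  have h := jacobi_summable hy (d := 0) (by rw [abs_of_nonneg] <;> norm_num)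
  simp only [add_zero] at h
  have h4 : Summable fun n : ℤ => (-1 : ℝ) ^ n * Real.exp (-π * y * (n : ℝ) ^ 2) := by
    apply Summable.of_norm
    refine h.congr fun n => ?_
    simp [norm_mul, abs_exp]
  exact h4.hasSum

lemma jacobi_norm_summable {y : ℝ} (hy : 0 < y) {d : ℝ} (hd : |d| ≤ 1 / 2) :
    Summable fun n : ℤ => ‖Real.exp (-π * y * ((n : ℝ) + d) ^ 2)‖ := by
  refine (jacobi_summable hy hd).congr fun n => ?_
  simp [abs_exp]

/-- Product of two absolutely convergent integer series. -/
lemma jacobi_prod_hasSum {u v : ℤ → ℝ} {U V : ℝ} (hu : HasSum u U) (hv : HasSum v V)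
    (hu' : Summable fun n => ‖u n‖) (hv' : Summable fun n => ‖v n‖) :
    HasSum (fun p : ℤ × ℤ => u p.1 * v p.2) (U * V) :=
  hu.mul hv (summable_mul_of_summable_norm hu' hv')

/-- Splitting a double sum along a parametrization by `Bool × ℤ × ℤ`. -/
lemma jacobi_split {F : ℤ × ℤ → ℝ} (e : Bool × ℤ × ℤ ≃ ℤ × ℤ) {S T0 T1 : ℝ}
    (hS : HasSum F S)
    (h0 : HasSum (fun p : ℤ × ℤ => F (e (false, p))) T0)
    (h1 : HasSum (fun p : ℤ × ℤ => F (e (true, p))) T1) : S = T0 + T1 := by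
  have He : HasSum (F ∘ e) S := e.hasSum_iff.mpr hS
  have hg : HasSum (fun b : Bool => if b then T1 else T0) S := by
    refine He.prod_fiberwise fun b => ?_
    cases b
    · simpa using h0
    · simpa using h1
  have h2 := (hasSum_fintype (fun b : Bool => if b then T1 else T0)).unique hg
  norm_num [Fintype.sum_bool] at h2
  linarith

def jacobiF1 : Bool × ℤ × ℤ → ℤ × ℤ
  | (false, a, b) => (a + b, a - b)
  | (true, a, b) => (a + b + 1, a - b)

lemma jacobiF1_bijective : Function.Bijective jacobiF1 := by
  constructor
  · rintro ⟨(_|_), a1, b1⟩ ⟨(_|_), a2, b2⟩ h <;>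
      simp only [jacobiF1, Prod.mk.injEq] at h ⊢ <;>
      obtain ⟨h1, h2⟩ := h <;>
      first
        | (exact ⟨trivial, by omega, by omega⟩)
        | (exact (show False by omega).elim)
  · rintro ⟨m, n⟩
    by_cases h : (m + n) % 2 = 0
    · exact ⟨(false, (m + n) / 2, (m - n) / 2), by
        simp only [jacobiF1, Prod.mk.injEq]; refine ⟨by omega, by omega⟩⟩
    · exact ⟨(true, (m + n) / 2, (m - n) / 2), by
        simp only [jacobiF1, Prod.mk.injEq]; refine ⟨by omega, by omega⟩⟩

noncomputable def jacobiE1 : Bool × ℤ × ℤ ≃ ℤ × ℤ := Equiv.ofBijective _ jacobiF1_bijective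

lemma jacobiE1_apply (p : Bool × ℤ × ℤ) : jacobiE1 p = jacobiF1 p := rfl

def jacobiF2 : Bool × ℤ × ℤ → ℤ × ℤ
  | (false, a, b) => (a + b, a - b)
  | (true, a, b) => (a + b, b - a - 1)

lemma jacobiF2_bijective : Function.Bijective jacobiF2 := by
  constructor
  · rintro ⟨(_|_), a1, b1⟩ ⟨(_|_), a2, b2⟩ h <;>
      simp only [jacobiF2, Prod.mk.injEq] at h ⊢ <;>
      obtain ⟨h1, h2⟩ := h <;>
      first
        | (exact ⟨trivial, by omega, by omega⟩)
        | (exact (show False by omega).elim)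
  · rintro ⟨m, n⟩
    by_cases h : (m + n) % 2 = 0
    · exact ⟨(false, (m + n) / 2, (m - n) / 2), by
        simp only [jacobiF2, Prod.mk.injEq]; refine ⟨by omega, by omega⟩⟩
    · exact ⟨(true, (m - n) / 2, (m + n + 1) / 2), by
        simp only [jacobiF2, Prod.mk.injEq]; refine ⟨by omega, by omega⟩⟩

noncomputable def jacobiE2 : Bool × ℤ × ℤ ≃ ℤ × ℤ := Equiv.ofBijective _ jacobiF2_bijective

lemma jacobiE2_apply (p : Bool × ℤ × ℤ) : jacobiE2 p = jacobiF2 p := rfl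

/-- Double-sum term functions. -/
noncomputable def jG3 (y : ℝ) (p : ℤ × ℤ) : ℝ :=
  Real.exp (-π * y * (p.1 : ℝ) ^ 2) * Real.exp (-π * y * (p.2 : ℝ) ^ 2)

noncomputable def jG2 (y : ℝ) (p : ℤ × ℤ) : ℝ :=
  Real.exp (-π * y * ((p.1 : ℝ) + 1 / 2) ^ 2) * Real.exp (-π * y * ((p.2 : ℝ) + 1 / 2) ^ 2)

noncomputable def jG4 (y : ℝ) (p : ℤ × ℤ) : ℝ :=
  ((-1 : ℝ) ^ p.1 * Real.exp (-π * y * (p.1 : ℝ) ^ 2)) *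
    ((-1 : ℝ) ^ p.2 * Real.exp (-π * y * (p.2 : ℝ) ^ 2))

noncomputable def jGM (y : ℝ) (p : ℤ × ℤ) : ℝ :=
  Real.exp (-π * y * ((p.1 : ℝ) + 1 / 2) ^ 2) * Real.exp (-π * y * (p.2 : ℝ) ^ 2)

lemma hasSum_jG3 {y : ℝ} (hy : 0 < y) : HasSum (jG3 y) (theta3 y * theta3 y) := by
  have hn := jacobi_norm_summable hy (d := 0) (by rw [abs_of_nonneg] <;> norm_num)
  simp only [add_zero] at hn
  have h := jacobi_prod_hasSum (hasSum_theta3 hy) (hasSum_theta3 hy) hn hn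
  exact h

lemma hasSum_jG2 {y : ℝ} (hy : 0 < y) : HasSum (jG2 y) (theta2 y * theta2 y) := by
  have hn := jacobi_norm_summable hy (d := 1/2) jacobi_half_abs
  have h := jacobi_prod_hasSum (hasSum_theta2 hy) (hasSum_theta2 hy) hn hn
  exact h

lemma hasSum_jG4 {y : ℝ} (hy : 0 < y) : HasSum (jG4 y) (theta4 y * theta4 y) := by
  have hn : Summable fun n : ℤ => ‖(-1 : ℝ) ^ n * Real.exp (-π * y * (n : ℝ) ^ 2)‖ := by
    have h := jacobi_norm_summable hy (d := 0) (by rw [abs_of_nonneg] <;> norm_num)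
    simp only [add_zero] at h
    refine h.congr fun n => ?_
    simp [norm_mul, abs_exp]
  have h2 := jacobi_prod_hasSum (hasSum_theta4 hy) (hasSum_theta4 hy) hn hn
  exact h2

lemma hasSum_jGM {y : ℝ} (hy : 0 < y) : HasSum (jGM y) (theta2 y * theta3 y) := by
  have hn := jacobi_norm_summable hy (d := 1/2) jacobi_half_abs
  have hn0 := jacobi_norm_summable hy (d := 0) (by rw [abs_of_nonneg] <;> norm_num)
  simp only [add_zero] at hn0
  have h := jacobi_prod_hasSum (hasSum_theta2 hy) (hasSum_theta3 hy) hn hn0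
  exact h

lemma theta3_sq {y : ℝ} (hy : 0 < y) :
    theta3 y ^ 2 = theta3 (2 * y) ^ 2 + theta2 (2 * y) ^ 2 := by
  have hy2 : 0 < 2 * y := by linarith
  have h0 : HasSum (fun p : ℤ × ℤ => jG3 y (jacobiE1 (false, p)))
      (theta3 (2 * y) * theta3 (2 * y)) := by
    have heq : (fun p : ℤ × ℤ => jG3 y (jacobiE1 (false, p))) = jG3 (2 * y) := by
      funext p
      obtain ⟨a, b⟩ := p
      simp only [jacobiE1_apply, jacobiF1, jG3]
      rw [← Real.exp_add, ← Real.exp_add]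
      congr 1
      push_cast
      ring
    rw [heq]
    exact hasSum_jG3 hy2
  have h1 : HasSum (fun p : ℤ × ℤ => jG3 y (jacobiE1 (true, p)))
      (theta2 (2 * y) * theta2 (2 * y)) := by
    have heq : (fun p : ℤ × ℤ => jG3 y (jacobiE1 (true, p))) = jG2 (2 * y) := by
      funext p
      obtain ⟨a, b⟩ := p
      simp only [jacobiE1_apply, jacobiF1, jG3, jG2]
      rw [← Real.exp_add, ← Real.exp_add]
      congr 1
      push_cast
      ring
    rw [heq]
    exact hasSum_jG2 hy2
  have key := jacobi_split jacobiE1 (hasSum_jG3 hy) h0 h1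
  rw [pow_two, pow_two, pow_two, key]

lemma theta4_sq {y : ℝ} (hy : 0 < y) :
    theta4 y ^ 2 = theta3 (2 * y) ^ 2 - theta2 (2 * y) ^ 2 := by
  have hy2 : 0 < 2 * y := by linarith
  have hne : (-1 : ℝ) ≠ 0 := by norm_num
  have h0 : HasSum (fun p : ℤ × ℤ => jG4 y (jacobiE1 (false, p)))
      (theta3 (2 * y) * theta3 (2 * y)) := by
    have heq : (fun p : ℤ × ℤ => jG4 y (jacobiE1 (false, p))) = jG3 (2 * y) := by
      funext p
      obtain ⟨a, b⟩ := p
      simp only [jacobiE1_apply, jacobiF1, jG4, jG3]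
      have hsign : (-1 : ℝ) ^ (a + b) * (-1 : ℝ) ^ (a - b) = 1 := by
        rw [← zpow_add₀ hne]
        have h2 : (a + b) + (a - b) = 2 * a := by ring
        rw [h2, zpow_mul]
        norm_num
      have hexp : Real.exp (-π * y * ((a + b : ℤ) : ℝ) ^ 2) *
          Real.exp (-π * y * ((a - b : ℤ) : ℝ) ^ 2) =
          Real.exp (-π * (2 * y) * (a : ℝ) ^ 2) * Real.exp (-π * (2 * y) * (b : ℝ) ^ 2) := by
        rw [← Real.exp_add, ← Real.exp_add]
        congr 1
        push_cast
        ring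
      calc ((-1 : ℝ) ^ (a + b) * Real.exp (-π * y * ((a + b : ℤ) : ℝ) ^ 2)) *
            ((-1 : ℝ) ^ (a - b) * Real.exp (-π * y * ((a - b : ℤ) : ℝ) ^ 2))
          = ((-1 : ℝ) ^ (a + b) * (-1 : ℝ) ^ (a - b)) *
            (Real.exp (-π * y * ((a + b : ℤ) : ℝ) ^ 2) *
              Real.exp (-π * y * ((a - b : ℤ) : ℝ) ^ 2)) := by ring
        _ = _ := by rw [hsign, hexp, one_mul]
    rw [heq]
    exact hasSum_jG3 hy2
  have h1 : HasSum (fun p : ℤ × ℤ => jG4 y (jacobiE1 (true, p)))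
      (-(theta2 (2 * y) * theta2 (2 * y))) := by
    have heq : (fun p : ℤ × ℤ => jG4 y (jacobiE1 (true, p))) = fun p => -(jG2 (2 * y) p) := by
      funext p
      obtain ⟨a, b⟩ := p
      simp only [jacobiE1_apply, jacobiF1, jG4, jG2]
      have hsign : (-1 : ℝ) ^ (a + b + 1) * (-1 : ℝ) ^ (a - b) = -1 := by
        rw [← zpow_add₀ hne]
        have h2 : (a + b + 1) + (a - b) = 2 * a + 1 := by ring
        rw [h2, zpow_add₀ hne, zpow_mul]
        norm_num
      have hexp : Real.exp (-π * y * ((a + b + 1 : ℤ) : ℝ) ^ 2) *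
          Real.exp (-π * y * ((a - b : ℤ) : ℝ) ^ 2) =
          Real.exp (-π * (2 * y) * ((a : ℝ) + 1 / 2) ^ 2) *
            Real.exp (-π * (2 * y) * ((b : ℝ) + 1 / 2) ^ 2) := by
        rw [← Real.exp_add, ← Real.exp_add]
        congr 1
        push_cast
        ring
      calc ((-1 : ℝ) ^ (a + b + 1) * Real.exp (-π * y * ((a + b + 1 : ℤ) : ℝ) ^ 2)) *
            ((-1 : ℝ) ^ (a - b) * Real.exp (-π * y * ((a - b : ℤ) : ℝ) ^ 2))
          = ((-1 : ℝ) ^ (a + b + 1) * (-1 : ℝ) ^ (a - b)) *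
            (Real.exp (-π * y * ((a + b + 1 : ℤ) : ℝ) ^ 2) *
              Real.exp (-π * y * ((a - b : ℤ) : ℝ) ^ 2)) := by ring
        _ = _ := by rw [hsign, hexp]; ring
    rw [heq]
    exact (hasSum_jG2 hy2).neg
  have key := jacobi_split jacobiE1 (hasSum_jG4 hy) h0 h1
  rw [pow_two, pow_two, pow_two, key]
  ring

lemma theta2_sq {y : ℝ} (hy : 0 < y) :
    theta2 y ^ 2 = 2 * (theta2 (2 * y) * theta3 (2 * y)) := by
  have hy2 : 0 < 2 * y := by linarith
  have h0 : HasSum (fun p : ℤ × ℤ => jG2 y (jacobiE2 (false, p)))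
      (theta2 (2 * y) * theta3 (2 * y)) := by
    have heq : (fun p : ℤ × ℤ => jG2 y (jacobiE2 (false, p))) = jGM (2 * y) := by
      funext p
      obtain ⟨a, b⟩ := p
      simp only [jacobiE2_apply, jacobiF2, jG2, jGM]
      rw [← Real.exp_add, ← Real.exp_add]
      congr 1
      push_cast
      ring
    rw [heq]
    exact hasSum_jGM hy2
  have h1 : HasSum (fun p : ℤ × ℤ => jG2 y (jacobiE2 (true, p)))
      (theta2 (2 * y) * theta3 (2 * y)) := by
    have heq : (fun p : ℤ × ℤ => jG2 y (jacobiE2 (true, p))) = jGM (2 * y) := by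
      funext p
      obtain ⟨a, b⟩ := p
      simp only [jacobiE2_apply, jacobiF2, jG2, jGM]
      rw [← Real.exp_add, ← Real.exp_add]
      congr 1
      push_cast
      ring
    rw [heq]
    exact hasSum_jGM hy2
  have key := jacobi_split jacobiE2 (hasSum_jG2 hy) h0 h1
  rw [pow_two, key]
  ring

/-- The Jacobi identity `θ2(y)^4 + θ4(y)^4 = θ3(y)^4` for `y > 0`. -/
theorem stmt_8 (y : ℝ) (hy : 0 < y) :
    theta2 y ^ 4 + theta4 y ^ 4 = theta3 y ^ 4 := by
  have h2 := theta2_sq hy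
  have h3 := theta3_sq hy
  have h4 := theta4_sq hy
  have e2 : theta2 y ^ 4 = (theta2 y ^ 2) ^ 2 := by ring
  have e3 : theta3 y ^ 4 = (theta3 y ^ 2) ^ 2 := by ring
  have e4 : theta4 y ^ 4 = (theta4 y ^ 2) ^ 2 := by ring
  rw [e2, e3, e4, h2, h3, h4]
  ring
end

section
/- Let θ2, θ3, θ4 be the Jacobi theta null values at iy for y > 0. The function f(y) = θ2(y)^4 θ4(y)^4 / θ3(y)^8 attains its maximum over y > 0 at y = 1, and the maximum value is f(1) = 1/4. -/
open Real

set_option maxHeartbeats 2000000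

lemma sumShift {s : ℝ} (hs : 0 < s) (c : ℝ) :
    Summable fun n : ℤ => Real.exp (-π * s * ((n : ℝ) + c) ^ 2) := by
  have h : Summable fun n : ℤ =>
      jacobiTheta₂_term n (((c * s : ℝ) : ℂ) * Complex.I) (((s : ℝ) : ℂ) * Complex.I) :=
    (summable_jacobiTheta₂_term_iff _ _).mpr (by simpa using hs)
  refine ((h.norm).mul_left (Real.exp (-π * s * c ^ 2))).congr fun n => ?_
  rw [norm_jacobiTheta₂_term, ← Real.exp_add]
  congr 1
  simp only [Complex.mul_I_im, Complex.ofReal_re]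
  ring

lemma sum3 {s : ℝ} (hs : 0 < s) : Summable fun n : ℤ => Real.exp (-π * s * (n : ℝ) ^ 2) := by
  simpa using sumShift hs 0

lemma sum4 {s : ℝ} (hs : 0 < s) :
    Summable fun n : ℤ => (-1 : ℝ) ^ n * Real.exp (-π * s * (n : ℝ) ^ 2) := by
  refine Summable.of_norm ((sum3 hs).congr fun n => ?_)
  rw [norm_mul, norm_zpow, norm_neg, norm_one, one_zpow, one_mul,
    Real.norm_eq_abs, abs_of_pos (Real.exp_pos _)]

set_option maxHeartbeats 1000000 in
lemma tsum_prod_eq {f g : ℤ → ℝ} (hf : Summable f) (hg : Summable g) :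
    ∑' p : ℤ × ℤ, f p.1 * g p.2 = (∑' n, f n) * (∑' n, g n) :=
  (tsum_mul_tsum_of_summable_norm (summable_norm_iff.mpr hf) (summable_norm_iff.mpr hg)).symm

set_option maxHeartbeats 1000000 in
lemma summable_prod_mul {f g : ℤ → ℝ} (hf : Summable f) (hg : Summable g) :
    Summable fun p : ℤ × ℤ => f p.1 * g p.2 :=
  summable_mul_of_summable_norm (summable_norm_iff.mpr hf) (summable_norm_iff.mpr hg)

def imap (q : ℤ × ℤ) : ℤ × ℤ := (q.1 + q.2, q.1 - q.2)
def kmap (q : ℤ × ℤ) : ℤ × ℤ := (q.1 + q.2 + 1, q.1 - q.2)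

lemma imap_inj : Function.Injective imap := by
  intro q q' h
  simp only [imap, Prod.mk.injEq] at h
  exact Prod.ext (by omega) (by omega)

lemma kmap_inj : Function.Injective kmap := by
  intro q q' h
  simp only [kmap, Prod.mk.injEq] at h
  exact Prod.ext (by omega) (by omega)

lemma mem_range_imap {p : ℤ × ℤ} (h : Even (p.1 + p.2)) : p ∈ Set.range imap := by
  obtain ⟨p1, p2⟩ := p
  obtain ⟨k, hk⟩ := h
  exact ⟨(k, p1 - k), by simp only [imap, Prod.mk.injEq]; constructor <;> omega⟩

lemma mem_range_kmap {p : ℤ × ℤ} (h : ¬ Even (p.1 + p.2)) : p ∈ Set.range kmap := by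
  rw [Int.not_even_iff_odd] at h
  obtain ⟨p1, p2⟩ := p
  obtain ⟨k, hk⟩ := h
  exact ⟨(k, p1 - 1 - k), by simp only [kmap, Prod.mk.injEq]; constructor <;> omega⟩

lemma theta3_sq_s9 {t : ℝ} (ht : 0 < t) :
    theta3 t ^ 2 = ∑' p : ℤ × ℤ,
      Real.exp (-π * t * (p.1 : ℝ) ^ 2) * Real.exp (-π * t * (p.2 : ℝ) ^ 2) := by
  rw [theta3, sq, tsum_prod_eq (sum3 ht) (sum3 ht)]

lemma theta4_sq_s9 {t : ℝ} (ht : 0 < t) :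
    theta4 t ^ 2 = ∑' p : ℤ × ℤ, (-1 : ℝ) ^ (p.1 + p.2) *
      (Real.exp (-π * t * (p.1 : ℝ) ^ 2) * Real.exp (-π * t * (p.2 : ℝ) ^ 2)) := by
  rw [theta4, sq, ← tsum_prod_eq (sum4 ht) (sum4 ht)]
  exact tsum_congr fun p => by
    rw [zpow_add₀ (by norm_num : (-1 : ℝ) ≠ 0)]; ring

lemma summable4prod {t : ℝ} (ht : 0 < t) :
    Summable fun p : ℤ × ℤ => (-1 : ℝ) ^ (p.1 + p.2) *
      (Real.exp (-π * t * (p.1 : ℝ) ^ 2) * Real.exp (-π * t * (p.2 : ℝ) ^ 2)) := by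
  refine (summable_prod_mul (sum4 ht) (sum4 ht)).congr fun p => ?_
  rw [zpow_add₀ (by norm_num : (-1 : ℝ) ≠ 0)]; ring

theorem landenA {t : ℝ} (ht : 0 < t) :
    theta3 t ^ 2 + theta4 t ^ 2 = 2 * theta3 (2 * t) ^ 2 := by
  have ht2 : (0 : ℝ) < 2 * t := by linarith
  have key : theta3 t ^ 2 + theta4 t ^ 2 = ∑' p : ℤ × ℤ, (1 + (-1 : ℝ) ^ (p.1 + p.2)) *
      (Real.exp (-π * t * (p.1 : ℝ) ^ 2) * Real.exp (-π * t * (p.2 : ℝ) ^ 2)) := by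
    rw [theta3_sq_s9 ht, theta4_sq_s9 ht,
      ← Summable.tsum_add (summable_prod_mul (sum3 ht) (sum3 ht)) (summable4prod ht)]
    exact tsum_congr fun p => by ring
  rw [key, ← imap_inj.tsum_eq (f := fun p : ℤ × ℤ => (1 + (-1 : ℝ) ^ (p.1 + p.2)) *
      (Real.exp (-π * t * (p.1 : ℝ) ^ 2) * Real.exp (-π * t * (p.2 : ℝ) ^ 2)))
      (fun p hp => mem_range_imap (by
        by_contra h
        apply hp
        simp [Odd.neg_one_zpow (Int.not_even_iff_odd.mp h)]))]
  have : ∀ q : ℤ × ℤ, (1 + (-1 : ℝ) ^ ((imap q).1 + (imap q).2)) *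
      (Real.exp (-π * t * ((imap q).1 : ℝ) ^ 2) * Real.exp (-π * t * ((imap q).2 : ℝ) ^ 2)) =
      2 * (Real.exp (-π * (2 * t) * (q.1 : ℝ) ^ 2) * Real.exp (-π * (2 * t) * (q.2 : ℝ) ^ 2)) := by
    intro q
    simp only [imap]
    rw [show q.1 + q.2 + (q.1 - q.2) = 2 * q.1 by ring, (even_two_mul q.1).neg_one_zpow,
      show Real.exp (-π * t * ((q.1 + q.2 : ℤ) : ℝ) ^ 2) *
          Real.exp (-π * t * ((q.1 - q.2 : ℤ) : ℝ) ^ 2) =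
          Real.exp (-π * (2 * t) * (q.1 : ℝ) ^ 2) * Real.exp (-π * (2 * t) * (q.2 : ℝ) ^ 2) by
        rw [← Real.exp_add, ← Real.exp_add]; congr 1; push_cast; ring]
    norm_num
  rw [tsum_congr this, tsum_mul_left, tsum_prod_eq (sum3 ht2) (sum3 ht2), theta3, sq]

theorem landenB {t : ℝ} (ht : 0 < t) :
    theta3 t ^ 2 - theta4 t ^ 2 = 2 * theta2 (2 * t) ^ 2 := by
  have ht2 : (0 : ℝ) < 2 * t := by linarith
  have key : theta3 t ^ 2 - theta4 t ^ 2 = ∑' p : ℤ × ℤ, (1 - (-1 : ℝ) ^ (p.1 + p.2)) *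
      (Real.exp (-π * t * (p.1 : ℝ) ^ 2) * Real.exp (-π * t * (p.2 : ℝ) ^ 2)) := by
    rw [theta3_sq_s9 ht, theta4_sq_s9 ht,
      ← Summable.tsum_sub (summable_prod_mul (sum3 ht) (sum3 ht)) (summable4prod ht)]
    exact tsum_congr fun p => by ring
  rw [key, ← kmap_inj.tsum_eq (f := fun p : ℤ × ℤ => (1 - (-1 : ℝ) ^ (p.1 + p.2)) *
      (Real.exp (-π * t * (p.1 : ℝ) ^ 2) * Real.exp (-π * t * (p.2 : ℝ) ^ 2)))
      (fun p hp => mem_range_kmap (fun h => hp (by simp [Even.neg_one_zpow h])))]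
  have : ∀ q : ℤ × ℤ, (1 - (-1 : ℝ) ^ ((kmap q).1 + (kmap q).2)) *
      (Real.exp (-π * t * ((kmap q).1 : ℝ) ^ 2) * Real.exp (-π * t * ((kmap q).2 : ℝ) ^ 2)) =
      2 * (Real.exp (-π * (2 * t) * ((q.1 : ℝ) + 1 / 2) ^ 2) *
        Real.exp (-π * (2 * t) * ((q.2 : ℝ) + 1 / 2) ^ 2)) := by
    intro q
    simp only [kmap]
    rw [show q.1 + q.2 + 1 + (q.1 - q.2) = 2 * q.1 + 1 by ring,
      (odd_two_mul_add_one q.1).neg_one_zpow,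
      show Real.exp (-π * t * ((q.1 + q.2 + 1 : ℤ) : ℝ) ^ 2) *
          Real.exp (-π * t * ((q.1 - q.2 : ℤ) : ℝ) ^ 2) =
          Real.exp (-π * (2 * t) * ((q.1 : ℝ) + 1 / 2) ^ 2) *
          Real.exp (-π * (2 * t) * ((q.2 : ℝ) + 1 / 2) ^ 2) by
        rw [← Real.exp_add, ← Real.exp_add]; congr 1; push_cast; ring]
    norm_num
  rw [tsum_congr this, tsum_mul_left,
    tsum_prod_eq (sumShift ht2 (1 / 2)) (sumShift ht2 (1 / 2)), theta2, sq]

theorem landenC {t : ℝ} (ht : 0 < t) :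
    theta2 t ^ 2 = 2 * (theta2 (2 * t) * theta3 (2 * t)) := by
  have ht2 : (0 : ℝ) < 2 * t := by linarith
  set G : ℤ × ℤ → ℝ := fun p =>
    Real.exp (-π * t * ((p.1 : ℝ) + 1 / 2) ^ 2) * Real.exp (-π * t * ((p.2 : ℝ) + 1 / 2) ^ 2)
    with hGdef
  have hG : Summable G := summable_prod_mul (sumShift ht (1 / 2)) (sumShift ht (1 / 2))
  have hGnn : ∀ p, 0 ≤ G p := fun p => by positivity
  have hSe : Summable fun p : ℤ × ℤ => if Even (p.1 + p.2) then G p else 0 := by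
    refine Summable.of_nonneg_of_le (fun p => ?_) (fun p => ?_) hG
    · split <;> [exact hGnn p; exact le_rfl]
    · split <;> [exact le_rfl; exact hGnn p]
  have hSo : Summable fun p : ℤ × ℤ => if Even (p.1 + p.2) then 0 else G p := by
    refine Summable.of_nonneg_of_le (fun p => ?_) (fun p => ?_) hG
    · split <;> [exact le_rfl; exact hGnn p]
    · split <;> [exact hGnn p; exact le_rfl]
  have hsplit : theta2 t ^ 2 =
      (∑' p : ℤ × ℤ, if Even (p.1 + p.2) then G p else 0) +
      (∑' p : ℤ × ℤ, if Even (p.1 + p.2) then 0 else G p) := by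
    rw [theta2, sq, ← tsum_prod_eq (sumShift ht (1 / 2)) (sumShift ht (1 / 2)),
      ← Summable.tsum_add hSe hSo]
    refine tsum_congr fun p => ?_
    by_cases h : Even (p.1 + p.2) <;> simp [h, G]
  have heven : (∑' p : ℤ × ℤ, if Even (p.1 + p.2) then G p else 0) =
      theta2 (2 * t) * theta3 (2 * t) := by
    rw [← imap_inj.tsum_eq (f := fun p : ℤ × ℤ => if Even (p.1 + p.2) then G p else 0)
      (fun p hp => mem_range_imap (by
        by_contra h
        exact hp (if_neg h)))]
    have h1 : ∀ q : ℤ × ℤ, (if Even ((imap q).1 + (imap q).2) then G (imap q) else 0) =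
        Real.exp (-π * (2 * t) * ((q.1 : ℝ) + 1 / 2) ^ 2) *
        Real.exp (-π * (2 * t) * (q.2 : ℝ) ^ 2) := by
      intro q
      rw [if_pos (by simpa [imap] using (⟨q.1, by ring⟩ : Even (q.1 + q.2 + (q.1 - q.2))))]
      simp only [imap, G]
      rw [← Real.exp_add, ← Real.exp_add]
      congr 1
      push_cast
      ring
    rw [tsum_congr h1, tsum_prod_eq (sumShift ht2 (1 / 2)) (sum3 ht2), theta2, theta3]
  have hodd : (∑' p : ℤ × ℤ, if Even (p.1 + p.2) then 0 else G p) =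
      theta3 (2 * t) * theta2 (2 * t) := by
    rw [← kmap_inj.tsum_eq (f := fun p : ℤ × ℤ => if Even (p.1 + p.2) then 0 else G p)
      (fun p hp => mem_range_kmap (by
        intro h
        exact hp (if_pos h)))]
    have h1 : ∀ q : ℤ × ℤ, (if Even ((kmap q).1 + (kmap q).2) then 0 else G (kmap q)) =
        Real.exp (-π * (2 * t) * ((q.1 : ℝ) + 1) ^ 2) *
        Real.exp (-π * (2 * t) * ((q.2 : ℝ) + 1 / 2) ^ 2) := by
      intro q
      rw [if_neg (by
        simp only [kmap]
        rw [show q.1 + q.2 + 1 + (q.1 - q.2) = 2 * q.1 + 1 by ring]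
        exact (Int.not_even_iff_odd).mpr (odd_two_mul_add_one q.1))]
      simp only [kmap, G]
      rw [← Real.exp_add, ← Real.exp_add]
      congr 1
      push_cast
      ring
    rw [tsum_congr h1, tsum_prod_eq (sumShift ht2 1) (sumShift ht2 (1 / 2))]
    congr 1
    · rw [theta3, ← (Equiv.addRight (1 : ℤ)).tsum_eq
        (fun n : ℤ => Real.exp (-π * (2 * t) * (n : ℝ) ^ 2))]
      refine tsum_congr fun n => ?_
      simp only [Equiv.coe_addRight]
      push_cast
      ring_nf
  rw [hsplit, heven, hodd]
  ring

theorem jacobi_identity {t : ℝ} (ht : 0 < t) :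
    theta2 t ^ 4 + theta4 t ^ 4 = theta3 t ^ 4 := by
  have hAB : (theta3 t ^ 2 + theta4 t ^ 2) * (theta3 t ^ 2 - theta4 t ^ 2) =
      (2 * theta3 (2 * t) ^ 2) * (2 * theta2 (2 * t) ^ 2) := by
    rw [landenA ht, landenB ht]
  have hC : (theta2 t ^ 2) ^ 2 = (2 * (theta2 (2 * t) * theta3 (2 * t))) ^ 2 := by
    rw [landenC ht]
  linear_combination hC - hAB

lemma theta3_pos {t : ℝ} (ht : 0 < t) : 0 < theta3 t := by
  rw [theta3]
  exact Summable.tsum_pos (sum3 ht) (fun n => (Real.exp_pos _).le) 0 (Real.exp_pos _)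

lemma theta2_pos {t : ℝ} (ht : 0 < t) : 0 < theta2 t := by
  rw [theta2]
  exact Summable.tsum_pos (sumShift ht (1 / 2)) (fun n => (Real.exp_pos _).le) 0 (Real.exp_pos _)

open Complex in
lemma theta2_one_eq_theta4_one : theta2 1 = theta4 1 := by
  have h4 : ((theta4 1 : ℝ) : ℂ) = jacobiTheta₂ (1 / 2) I := by
    rw [theta4, Complex.ofReal_tsum, jacobiTheta₂]
    refine tsum_congr fun n => ?_
    rw [jacobiTheta₂_term,
      show (2 * ↑π * I * (n : ℂ) * (1 / 2) + ↑π * I * (n : ℂ) ^ 2 * I) =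
        (n : ℂ) * (↑π * I) + ((-π * 1 * (n : ℝ) ^ 2 : ℝ) : ℂ) by
        push_cast
        linear_combination (↑π * (n : ℂ) ^ 2) * Complex.I_sq,
      Complex.exp_add, Complex.exp_int_mul, Complex.exp_pi_mul_I, ← Complex.ofReal_exp]
    push_cast
    ring
  have h2 : ((theta2 1 : ℝ) : ℂ) = cexp (((-π / 4 : ℝ) : ℂ)) * jacobiTheta₂ (I / 2) I := by
    rw [theta2, Complex.ofReal_tsum, jacobiTheta₂, ← tsum_mul_left]
    refine tsum_congr fun n => ?_
    rw [jacobiTheta₂_term, ← Complex.exp_add,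
      show (((-π / 4 : ℝ) : ℂ) + (2 * ↑π * I * (n : ℂ) * (I / 2) + ↑π * I * (n : ℂ) ^ 2 * I)) =
        ((-π * 1 * ((n : ℝ) + 1 / 2) ^ 2 : ℝ) : ℂ) by
        push_cast
        linear_combination (↑π * (n : ℂ) + ↑π * (n : ℂ) ^ 2) * Complex.I_sq,
      ← Complex.ofReal_exp]
  have key := jacobiTheta₂_functional_equation (1 / 2) I
  rw [show (-I * I : ℂ) = 1 by linear_combination -Complex.I_sq,
    Complex.one_cpow, div_one, one_mul,
    show (-↑π * I * (1 / 2 : ℂ) ^ 2 / I) = ((-π / 4 : ℝ) : ℂ) by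
      rw [div_eq_iff Complex.I_ne_zero]; push_cast; ring,
    show ((1 / 2 : ℂ) / I) = -(I / 2) by
      rw [div_eq_iff Complex.I_ne_zero]; linear_combination (1 / 2 : ℂ) * Complex.I_sq,
    show ((-1 : ℂ) / I) = I by
      rw [div_eq_iff Complex.I_ne_zero]; linear_combination -Complex.I_sq,
    jacobiTheta₂_neg_left] at key
  have : ((theta4 1 : ℝ) : ℂ) = ((theta2 1 : ℝ) : ℂ) := by rw [h4, h2, key]
  exact (Complex.ofReal_inj.mp this).symm

noncomputable def jacobiF (y : ℝ) : ℝ := theta2 y ^ 4 * theta4 y ^ 4 / theta3 y ^ 8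

/-- `f(y) = θ2(y)^4 θ4(y)^4/θ3(y)^8` attains its maximum over `y > 0` at
`y = 1`, with maximum value `1/4`. -/
theorem stmt_9 :
    (∀ y : ℝ, 0 < y → jacobiF y ≤ jacobiF 1) ∧ jacobiF 1 = 1 / 4 := by
  have h1 : jacobiF 1 = 1 / 4 := by
    have e : theta2 1 = theta4 1 := theta2_one_eq_theta4_one
    have hid : theta2 1 ^ 4 + theta4 1 ^ 4 = theta3 1 ^ 4 := jacobi_identity one_pos
    have ha : 0 < theta2 1 := theta2_pos one_pos
    have h3 : 0 < theta3 (1 : ℝ) := theta3_pos one_pos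
    rw [jacobiF, ← e] at *
    rw [div_eq_iff (by positivity : theta3 (1 : ℝ) ^ 8 ≠ 0)]
    have h8 : theta3 (1 : ℝ) ^ 8 = (theta3 1 ^ 4) ^ 2 := by ring
    rw [h8, ← hid]
    ring
  refine ⟨fun y hy => ?_, h1⟩
  rw [h1]
  have hid : theta2 y ^ 4 + theta4 y ^ 4 = theta3 y ^ 4 := jacobi_identity hy
  have h3 : 0 < theta3 y := theta3_pos hy
  rw [jacobiF, div_le_iff₀ (by positivity)]
  have h8 : (theta2 y ^ 4 + theta4 y ^ 4) ^ 2 = theta3 y ^ 8 := by rw [hid]; ring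
  nlinarith [sq_nonneg (theta2 y ^ 4 - theta4 y ^ 4)]
end

section
/- The polynomial D(z) = (1-z)^6 - (45/8)(1-z)^3 z^2 + (3915/2048) z^4 has strictly negative derivative on (0, 1/4], hence attains its minimum on [0,1/4] at z = 1/4. -/
open Set

noncomputable def reciprocalSecrecy (z : ℝ) : ℝ :=
  (1 - z) ^ 6 - 45 / 8 * (1 - z) ^ 3 * z ^ 2 + 3915 / 2048 * z ^ 4

lemma hasDerivAt_reciprocalSecrecy (z : ℝ) :
    HasDerivAt reciprocalSecrecy
      (-6 + 75 / 4 * z - 75 / 8 * z ^ 2 + 75 / 512 * z ^ 3 - 15 / 8 * z ^ 4 + 6 * z ^ 5) z := by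
  have hw : HasDerivAt (fun z : ℝ => 1 - z) (-1) z := (hasDerivAt_id z).const_sub 1
  have h := ((hw.fun_pow 6).fun_sub (((hw.fun_pow 3).fun_mul (hasDerivAt_pow 2 z)).const_mul
    (45 / 8))).fun_add ((hasDerivAt_pow 4 z).const_mul (3915 / 2048))
  exact (h.congr_deriv (by norm_num; ring)).congr_of_eventuallyEq
    (.of_forall fun x => by simp only [reciprocalSecrecy]; ring)

lemma deriv_reciprocalSecrecy_neg {z : ℝ} (hz : z ≤ 1 / 4) : deriv reciprocalSecrecy z < 0 := by
  rw [(hasDerivAt_reciprocalSecrecy z).deriv]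
  -- `-6 + 75/4 z ≤ -21/16` outweighs the positive terms `75/512 z^3 + 6 z^5 ≤ 81/8192`.
  have hz3 : z ^ 3 ≤ (1 / 4) ^ 3 := (Odd.pow_le_pow (by decide)).2 hz
  have hz5 : z ^ 5 ≤ (1 / 4) ^ 5 := (Odd.pow_le_pow (by decide)).2 hz
  nlinarith [sq_nonneg z, sq_nonneg (z ^ 2)]

lemma strictAntiOn_reciprocalSecrecy : StrictAntiOn reciprocalSecrecy (Iic (1 / 4)) :=
  strictAntiOn_of_deriv_neg (convex_Iic _)
    (fun z _ => (hasDerivAt_reciprocalSecrecy z).continuousAt.continuousWithinAt)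
    (fun _ hz => deriv_reciprocalSecrecy_neg (le_of_lt (by rwa [interior_Iic] at hz)))

/-- `D(z) = (1-z)^6 - (45/8)(1-z)^3 z^2 + (3915/2048) z^4` has strictly
negative derivative on `(0, 1/4]`, hence attains its minimum on `[0,1/4]`
at `z = 1/4`. -/
theorem stmt_14 :
    (∀ z ∈ Ioc (0 : ℝ) (1 / 4),
        deriv (fun z : ℝ =>
          (1 - z) ^ 6 - 45 / 8 * (1 - z) ^ 3 * z ^ 2 + 3915 / 2048 * z ^ 4) z < 0) ∧
      ∀ z ∈ Icc (0 : ℝ) (1 / 4),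
        (1 - (1 / 4 : ℝ)) ^ 6 - 45 / 8 * (1 - (1 / 4 : ℝ)) ^ 3 * (1 / 4 : ℝ) ^ 2
            + 3915 / 2048 * (1 / 4 : ℝ) ^ 4 ≤
          (1 - z) ^ 6 - 45 / 8 * (1 - z) ^ 3 * z ^ 2 + 3915 / 2048 * z ^ 4 :=
  ⟨fun _ hz => deriv_reciprocalSecrecy_neg hz.2,
    fun _ hz => strictAntiOn_reciprocalSecrecy.antitoneOn hz.2 self_mem_Iic hz.2⟩
end

section
/- The polynomial D(z) = (1-z)^9 - (135/16)(1-z)^6 z^2 + (60345/4096)(1-z)^3 z^4 - (53325/32768) z^6 is strictly decreasing on [0, 1/4], and hence attains its minimum on [0,1/4] at z = 1/4. -/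
/-!
On `[0, 1/4]` we have `3z ≤ 1 - z`, so in `D'` the positive term `(405/8) z² (1-z)⁵` is absorbed
by the negative term `-(135/8) z (1-z)⁶`, and the other positive term
`(60345/1024) z³ (1-z)³ ≤ (60345/27648) (1-z)⁶ < 4 (1-z)⁸` is absorbed by `-9 (1-z)⁸`.
Hence `D' < 0` there.
-/

open Set

noncomputable section

/-- The reciprocal `D(z)` of the secrecy function of the extremal even unimodular lattice in
dimension 72. -/
def secrecyRecip72 (z : ℝ) : ℝ :=
  (1 - z) ^ 9 - 135 / 16 * (1 - z) ^ 6 * z ^ 2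
    + 60345 / 4096 * (1 - z) ^ 3 * z ^ 4 - 53325 / 32768 * z ^ 6

def secrecyRecip72Deriv (z : ℝ) : ℝ :=
  -9 * (1 - z) ^ 8 - 135 / 8 * z * (1 - z) ^ 6 + 405 / 8 * z ^ 2 * (1 - z) ^ 5
    + 60345 / 1024 * z ^ 3 * (1 - z) ^ 3 - 181035 / 4096 * z ^ 4 * (1 - z) ^ 2
    - 159975 / 16384 * z ^ 5

end

theorem hasDerivAt_secrecyRecip72 (z : ℝ) :
    HasDerivAt secrecyRecip72 (secrecyRecip72Deriv z) z := by
  have h₁ : HasDerivAt (fun z : ℝ => 1 - z) (-1) z := (hasDerivAt_id z).const_sub 1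
  have h := ((((h₁.fun_pow 9).fun_sub
    (((h₁.fun_pow 6).const_mul (135 / 16)).fun_mul (hasDerivAt_pow 2 z))).fun_add
    (((h₁.fun_pow 3).const_mul (60345 / 4096)).fun_mul (hasDerivAt_pow 4 z))).fun_sub
    ((hasDerivAt_pow 6 z).const_mul (53325 / 32768)))
  refine h.congr_deriv ?_
  simp only [secrecyRecip72Deriv]
  push_cast
  ring

theorem secrecyRecip72Deriv_neg {z : ℝ} (hz : z ∈ Icc (0 : ℝ) (1 / 4)) :
    secrecyRecip72Deriv z < 0 := by
  obtain ⟨hz₀, hz₁⟩ := hz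
  unfold secrecyRecip72Deriv
  set u := 1 - z
  have hu₀ : 0 < u := by linarith
  have h3z : 3 * z ≤ u := by linarith
  have hquad : 3 * (z ^ 2 * u ^ 5) ≤ z * u ^ 6 := by
    have : 0 ≤ z * u ^ 5 * (u - 3 * z) := by
      have := sub_nonneg.2 h3z
      positivity
    linarith
  have hcub : 27 * (z ^ 3 * u ^ 3) ≤ u ^ 6 := by
    have : (3 * z) ^ 3 ≤ u ^ 3 := pow_le_pow_left₀ (by positivity) h3z 3
    nlinarith [pow_nonneg hu₀.le 3]
  have hu8 : 9 * u ^ 6 ≤ 16 * u ^ 8 := by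
    have : 9 ≤ 16 * u ^ 2 := by nlinarith
    nlinarith [pow_nonneg hu₀.le 6]
  have : 0 ≤ z ^ 4 * u ^ 2 := by positivity
  linarith [pow_pos hu₀ 8, pow_nonneg hz₀ 5]

theorem strictAntiOn_secrecyRecip72 : StrictAntiOn secrecyRecip72 (Icc 0 (1 / 4)) := by
  refine strictAntiOn_of_deriv_neg (convex_Icc 0 (1 / 4)) ?_ fun z hz => ?_
  · exact fun z _ => (hasDerivAt_secrecyRecip72 z).continuousAt.continuousWithinAt
  · rw [(hasDerivAt_secrecyRecip72 z).deriv]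
    exact secrecyRecip72Deriv_neg (interior_subset hz)

/-- `D(z) = (1-z)^9 - (135/16)(1-z)^6 z^2 + (60345/4096)(1-z)^3 z^4
- (53325/32768) z^6` is strictly decreasing on `[0, 1/4]`, hence attains its
minimum on `[0,1/4]` at `z = 1/4`. -/
theorem stmt_15 :
    StrictAntiOn (fun z : ℝ =>
        (1 - z) ^ 9 - 135 / 16 * (1 - z) ^ 6 * z ^ 2
          + 60345 / 4096 * (1 - z) ^ 3 * z ^ 4 - 53325 / 32768 * z ^ 6)
      (Icc 0 (1 / 4)) ∧
      ∀ z ∈ Icc (0 : ℝ) (1 / 4),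
        (1 - (1 / 4 : ℝ)) ^ 9 - 135 / 16 * (1 - (1 / 4 : ℝ)) ^ 6 * (1 / 4 : ℝ) ^ 2
            + 60345 / 4096 * (1 - (1 / 4 : ℝ)) ^ 3 * (1 / 4 : ℝ) ^ 4
            - 53325 / 32768 * (1 / 4 : ℝ) ^ 6 ≤
          (1 - z) ^ 9 - 135 / 16 * (1 - z) ^ 6 * z ^ 2
            + 60345 / 4096 * (1 - z) ^ 3 * z ^ 4 - 53325 / 32768 * z ^ 6 :=
  ⟨strictAntiOn_secrecyRecip72, fun _ hz =>
    strictAntiOn_secrecyRecip72.antitoneOn hz (right_mem_Icc.2 (by norm_num)) hz.2⟩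
end

section
/- The polynomial D(z) = (1-z)^{10} - (75/8)(1-z)^7 z^2 + (42525/2048)(1-z)^4 z^4 - (202125/32768)(1-z) z^6 is strictly decreasing on [0, 1/4], and hence attains its minimum on [0,1/4] at z = 1/4. -/
open Set

noncomputable def reciprocalSecrecy80 (z : ℝ) : ℝ :=
  (1 - z) ^ 10 - 75 / 8 * (1 - z) ^ 7 * z ^ 2 + 42525 / 2048 * (1 - z) ^ 4 * z ^ 4
    - 202125 / 32768 * (1 - z) * z ^ 6

noncomputable def reciprocalSecrecy80Deriv (x : ℝ) : ℝ :=
  -10 + 285 / 4 * x - 1305 / 8 * x ^ 2 + 69405 / 512 * x ^ 3 - 17745 / 512 * x ^ 4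
    + 28665 / 16384 * x ^ 5 - 3045 / 32768 * x ^ 6 + 285 / 256 * x ^ 7 - 45 / 8 * x ^ 8
    + 10 * x ^ 9

theorem hasDerivAt_reciprocalSecrecy80 (x : ℝ) :
    HasDerivAt reciprocalSecrecy80 (reciprocalSecrecy80Deriv x) x := by
  have hu : HasDerivAt (fun z : ℝ => 1 - z) (-1) x := (hasDerivAt_id' x).const_sub 1
  have hz := hasDerivAt_id' x
  refine ((((hu.fun_pow 10).fun_sub
    (((hu.fun_pow 7).const_mul (75 / 8)).fun_mul (hz.fun_pow 2))).fun_add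
    (((hu.fun_pow 4).const_mul (42525 / 2048)).fun_mul (hz.fun_pow 4))).fun_sub
    ((hu.const_mul (202125 / 32768)).fun_mul (hz.fun_pow 6))).congr_deriv ?_
  unfold reciprocalSecrecy80Deriv
  push_cast
  ring

theorem reciprocalSecrecy80Deriv_neg {x : ℝ} (h0 : 0 ≤ x) (h1 : x ≤ 1 / 4) :
    reciprocalSecrecy80Deriv x < 0 := by
  have hx : 0 ≤ x * (1 / 4 - x) := mul_nonneg h0 (sub_nonneg.2 h1)
  unfold reciprocalSecrecy80Deriv
  nlinarith [mul_nonneg h0 hx, mul_nonneg (pow_nonneg h0 2) hx, mul_nonneg (pow_nonneg h0 3) hx,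
    mul_nonneg (pow_nonneg h0 4) hx, mul_nonneg (pow_nonneg h0 5) hx,
    mul_nonneg (pow_nonneg h0 6) hx, mul_nonneg (pow_nonneg h0 7) hx]

theorem strictAntiOn_reciprocalSecrecy80 : StrictAntiOn reciprocalSecrecy80 (Icc 0 (1 / 4)) := by
  refine strictAntiOn_of_hasDerivWithinAt_neg (convex_Icc _ _)
    (fun x _ => (hasDerivAt_reciprocalSecrecy80 x).continuousAt.continuousWithinAt)
    (fun x _ => (hasDerivAt_reciprocalSecrecy80 x).hasDerivWithinAt) fun x hx => ?_
  rw [interior_Icc] at hx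
  exact reciprocalSecrecy80Deriv_neg hx.1.le hx.2.le

/-- `D(z) = (1-z)^10 - (75/8)(1-z)^7 z^2 + (42525/2048)(1-z)^4 z^4
- (202125/32768)(1-z) z^6` is strictly decreasing on `[0, 1/4]`, hence
attains its minimum on `[0,1/4]` at `z = 1/4`. -/
theorem stmt_16 :
    StrictAntiOn (fun z : ℝ =>
        (1 - z) ^ 10 - 75 / 8 * (1 - z) ^ 7 * z ^ 2
          + 42525 / 2048 * (1 - z) ^ 4 * z ^ 4
          - 202125 / 32768 * (1 - z) * z ^ 6)
      (Icc 0 (1 / 4)) ∧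
      ∀ z ∈ Icc (0 : ℝ) (1 / 4),
        (1 - (1 / 4 : ℝ)) ^ 10 - 75 / 8 * (1 - (1 / 4 : ℝ)) ^ 7 * (1 / 4 : ℝ) ^ 2
            + 42525 / 2048 * (1 - (1 / 4 : ℝ)) ^ 4 * (1 / 4 : ℝ) ^ 4
            - 202125 / 32768 * (1 - (1 / 4 : ℝ)) * (1 / 4 : ℝ) ^ 6 ≤
          (1 - z) ^ 10 - 75 / 8 * (1 - z) ^ 7 * z ^ 2
            + 42525 / 2048 * (1 - z) ^ 4 * z ^ 4
            - 202125 / 32768 * (1 - z) * z ^ 6 :=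
  ⟨strictAntiOn_reciprocalSecrecy80, fun _ hz =>
    strictAntiOn_reciprocalSecrecy80.antitoneOn hz (right_mem_Icc.2 (by norm_num)) hz.2⟩
end
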